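/- arXiv:2107.06822 — 3 statements merged into one kernel-verified Lean document; each statement's English description precedes it below -/
import Mathlib

section
/- Let $\gamma_F \in [\alpha_F, \beta_F]$ with $0 < \alpha_F \le 1 \le \beta_F$, let $\gamma_{NE} \in [\alpha_{NE}, \beta_{NE}]$ with $\alpha_{NE} > 0$, and let $\omega \in (0, 1]$ with $\omega \le \gamma_{NE}$. Then the positive root $\lambda_+ = \tfrac12\left[\omega - \gamma_F + \sqrt{(\gamma_F + \omega)^2 + 4(\gamma_{NE} - \omega)}\right]$ of $\lambda^2 + (\gamma_F - \omega)\lambda - (\omega(\gamma_F - 1) + \gamma_{NE}) = 0$ satisfies $\lambda_+ \geq \tfrac12\left(-\beta_F + \sqrt{\beta_F^2 + 4\alpha_{NE}}\right)$. -/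
theorem stmt12 (αF βF αNE βNE γF γNE ω : ℝ)
    (hαF : 0 < αF) (hαF1 : αF ≤ 1) (h1βF : 1 ≤ βF)
    (hγF : γF ∈ Set.Icc αF βF) (hαNE : 0 < αNE) (hγNE : γNE ∈ Set.Icc αNE βNE)
    (hω0 : 0 < ω) (hω1 : ω ≤ 1) (hωγ : ω ≤ γNE) :
    (1 / 2) * (-βF + Real.sqrt (βF ^ 2 + 4 * αNE)) ≤
      (1 / 2) * (ω - γF + Real.sqrt ((γF + ω) ^ 2 + 4 * (γNE - ω))) := by
  obtain ⟨hγFl, hγFu⟩ := hγF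
  obtain ⟨hγNEl, hγNEu⟩ := hγNE
  set S1 := Real.sqrt (βF ^ 2 + 4 * αNE) with hS1
  set S2 := Real.sqrt ((γF + ω) ^ 2 + 4 * (γNE - ω)) with hS2
  have hS1sq : S1 ^ 2 = βF ^ 2 + 4 * αNE := Real.sq_sqrt (by nlinarith)
  have hS2sq : S2 ^ 2 = (γF + ω) ^ 2 + 4 * (γNE - ω) := Real.sq_sqrt (by nlinarith)
  have hS1nn : 0 ≤ S1 := Real.sqrt_nonneg _
  have hS2nn : 0 ≤ S2 := Real.sqrt_nonneg _
  have hS2ge : γF + ω ≤ S2 := by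
    have h1 : Real.sqrt ((γF + ω) ^ 2) ≤ S2 :=
      Real.sqrt_le_sqrt (by nlinarith)
    have h2 : Real.sqrt ((γF + ω) ^ 2) = γF + ω := by
      rw [Real.sqrt_sq (by linarith)]
    linarith
  -- suffices: S1 ≤ ω - γF + βF + S2
  have key : S1 ≤ ω - γF + βF + S2 := by
    have hrhs : 0 ≤ ω - γF + βF + S2 := by linarith
    nlinarith [sq_nonneg (S1 - (ω - γF + βF + S2)), sq_nonneg (S1 + (ω - γF + βF + S2)),
      mul_nonneg hS1nn hS2nn, mul_le_mul_of_nonneg_left hS2ge (show (0:ℝ) ≤ ω - γF + βF by linarith)]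
  linarith
end

section
/- Let $\gamma_F \in [\alpha_F, \beta_F]$ with $0 < \alpha_F \le 1 \le \beta_F$, $\gamma_{NE} \in [\alpha_{NE}, \beta_{NE}]$ with $\alpha_{NE} > 0$, and $\omega \in (0,1]$ with $\omega \le \gamma_{NE}$. Then the positive root $\lambda_+$ of $\lambda^2 + (\gamma_F - \omega)\lambda - (\omega(\gamma_F - 1) + \gamma_{NE}) = 0$ satisfies $\lambda_+ \leq 1 + \sqrt{\beta_{NE} - 1}$ provided $\beta_{NE} \ge 1$, and the negative root $\lambda_-$ satisfies $\lambda_- \geq -\beta_F - \sqrt{\beta_{NE}}$. -/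
theorem stmt13 (αF βF αNE βNE γF γNE ω : ℝ)
    (hαF : 0 < αF) (hαF1 : αF ≤ 1) (h1βF : 1 ≤ βF)
    (hγF : γF ∈ Set.Icc αF βF) (hαNE : 0 < αNE) (hγNE : γNE ∈ Set.Icc αNE βNE)
    (hω0 : 0 < ω) (hω1 : ω ≤ 1) (hωγ : ω ≤ γNE) (hβNE : 1 ≤ βNE) :
    (1 / 2) * (ω - γF + Real.sqrt ((γF + ω) ^ 2 + 4 * (γNE - ω))) ≤
      1 + Real.sqrt (βNE - 1) ∧
    -βF - Real.sqrt βNE ≤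
      (1 / 2) * (ω - γF - Real.sqrt ((γF + ω) ^ 2 + 4 * (γNE - ω))) := by
  obtain ⟨hγF1, hγF2⟩ := hγF
  obtain ⟨hγNE1, hγNE2⟩ := hγNE
  set s := Real.sqrt (βNE - 1) with hs
  set t := Real.sqrt βNE with ht
  have hs0 : 0 ≤ s := Real.sqrt_nonneg _
  have ht0 : 0 ≤ t := Real.sqrt_nonneg _
  have hs2 : s ^ 2 = βNE - 1 := Real.sq_sqrt (by linarith)
  have ht2 : t ^ 2 = βNE := Real.sq_sqrt (by linarith)
  have hγF0 : 0 < γF := lt_of_lt_of_le hαF hγF1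
  have hc1 : 0 ≤ 2 + 2 * s + γF - ω := by linarith
  have hc2 : 0 ≤ 2 * βF - γF + ω + 2 * t := by linarith
  have hD1 : (γF + ω) ^ 2 + 4 * (γNE - ω) ≤ (2 + 2 * s + γF - ω) ^ 2 := by
    nlinarith [mul_nonneg hs0 (by linarith : (0:ℝ) ≤ 2 + γF - ω),
      mul_nonneg hγF0.le (by linarith : (0:ℝ) ≤ 1 - ω)]
  have hD2 : (γF + ω) ^ 2 + 4 * (γNE - ω) ≤ (2 * βF - γF + ω + 2 * t) ^ 2 := by
    nlinarith [sq_nonneg (βF - γF + t), mul_nonneg ht0 (by linarith : (0:ℝ) ≤ βF - γF),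
      mul_nonneg (by linarith : (0:ℝ) ≤ βF - γF + t) (by linarith : (0:ℝ) ≤ γF + ω)]
  have h1 : Real.sqrt ((γF + ω) ^ 2 + 4 * (γNE - ω)) ≤ 2 + 2 * s + γF - ω := by
    calc Real.sqrt ((γF + ω) ^ 2 + 4 * (γNE - ω)) ≤ Real.sqrt ((2 + 2 * s + γF - ω) ^ 2) :=
          Real.sqrt_le_sqrt hD1
      _ = 2 + 2 * s + γF - ω := Real.sqrt_sq hc1
  have h2 : Real.sqrt ((γF + ω) ^ 2 + 4 * (γNE - ω)) ≤ 2 * βF - γF + ω + 2 * t := by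
    calc Real.sqrt ((γF + ω) ^ 2 + 4 * (γNE - ω)) ≤ Real.sqrt ((2 * βF - γF + ω + 2 * t) ^ 2) :=
          Real.sqrt_le_sqrt hD2
      _ = 2 * βF - γF + ω + 2 * t := Real.sqrt_sq hc2
  constructor <;> linarith
end

section
/- Let $A \in \mathbb{R}^{m\times n}$, let $G \in \mathbb{R}^{n\times n}$ be diagonal positive definite, let $\delta > 0$, and let $\mathcal{N} \subseteq \{1,\dots,n\}$ with complement $\mathcal{R}$. Define $M = A G A^\top + \delta I_m$ and $P = A^{(:,\mathcal{R})} G^{(\mathcal{R},\mathcal{R})} (A^{(:,\mathcal{R})})^\top + \delta I_m$. Then every eigenvalue $\lambda$ of $P^{-1} M$ satisfies $1 \leq \lambda \leq 1 + \frac{\max_{j \in \mathcal{N}} G^{(j,j)}}{\delta} \sigma_{\max}^2(A)$. -/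
open Matrix

lemma quad_diag {m n : ℕ} (A : Matrix (Fin m) (Fin n) ℝ) (d : Fin n → ℝ) (v : Fin m → ℝ) :
    v ⬝ᵥ ((A * Matrix.diagonal d * Aᵀ) *ᵥ v) = ∑ j, d j * (Aᵀ *ᵥ v) j ^ 2 := by
  rw [← Matrix.mulVec_mulVec, ← Matrix.mulVec_mulVec, Matrix.dotProduct_mulVec,
    ← Matrix.mulVec_transpose]
  simp only [dotProduct, Matrix.mulVec_diagonal]
  exact Finset.sum_congr rfl fun j _ => by ring

lemma rayleigh_bound {k : ℕ} [Nonempty (Fin k)] (B : Matrix (Fin k) (Fin k) ℝ)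
    (hB : B.IsHermitian) (v : Fin k → ℝ) :
    v ⬝ᵥ (B *ᵥ v) ≤ (⨆ i, hB.eigenvalues i) * (v ⬝ᵥ v) := by
  set U : Matrix (Fin k) (Fin k) ℝ := (hB.eigenvectorUnitary : Matrix (Fin k) (Fin k) ℝ) with hU
  set w : Fin k → ℝ := star U *ᵥ v with hw
  have hdot : ∀ x : Fin k → ℝ, v ⬝ᵥ (U *ᵥ x) = w ⬝ᵥ x := by
    intro x
    rw [Matrix.dotProduct_mulVec, ← Matrix.mulVec_transpose, hw,
      ← Matrix.conjTranspose_eq_transpose_of_trivial, Matrix.star_eq_conjTranspose]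
  have hvv : w ⬝ᵥ w = v ⬝ᵥ v := by
    rw [← hdot w, hw, Matrix.mulVec_mulVec, Unitary.mul_star_self_of_mem hB.eigenvectorUnitary.2,
      Matrix.one_mulVec]
  have hq : v ⬝ᵥ (B *ᵥ v) = ∑ i, hB.eigenvalues i * (w i) ^ 2 := by
    conv_lhs => rw [hB.spectral_theorem, Unitary.conjStarAlgAut_apply]
    rw [← Matrix.mulVec_mulVec, ← Matrix.mulVec_mulVec, hdot]
    simp only [dotProduct, Matrix.mulVec_diagonal, Function.comp_apply]
    exact Finset.sum_congr rfl fun j _ => by push_cast [RCLike.ofReal_real_eq_id, id_eq]; ring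
  rw [hq, ← hvv, dotProduct, Finset.mul_sum]
  refine Finset.sum_le_sum fun i _ => ?_
  have h1 : hB.eigenvalues i ≤ ⨆ i, hB.eigenvalues i :=
    le_ciSup (Set.finite_range _).bddAbove i
  nlinarith [sq_nonneg (w i)]

theorem stmt15 {m n : ℕ} (A : Matrix (Fin m) (Fin n) ℝ) (g : Fin n → ℝ)
    (hg : ∀ j, 0 < g j) (δ : ℝ) (hδ : 0 < δ) (Nset : Finset (Fin n))
    (lam : ℝ) (v : Fin m → ℝ) (hv : v ≠ 0)
    (heig : (A * Matrix.diagonal g * Aᵀ + δ • (1 : Matrix (Fin m) (Fin m) ℝ)).mulVec v =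
        lam • ((A * Matrix.diagonal (fun j => if j ∈ Nset then 0 else g j) * Aᵀ +
          δ • (1 : Matrix (Fin m) (Fin m) ℝ)).mulVec v)) :
    1 ≤ lam ∧ lam ≤ 1 + ((⨆ j : {x // x ∈ Nset}, g j.1) / δ) *
      (⨆ i, (Matrix.isHermitian_mul_conjTranspose_self A).eigenvalues i) := by
  have hm : Nonempty (Fin m) := by
    rcases Function.ne_iff.1 hv with ⟨i, -⟩
    exact ⟨i⟩
  set w : Fin n → ℝ := Aᵀ *ᵥ v with hw
  set vv : ℝ := v ⬝ᵥ v with hvvdef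
  have hvvnn : 0 ≤ vv := Finset.sum_nonneg fun i _ => mul_self_nonneg _
  have hvv0 : 0 < vv :=
    lt_of_le_of_ne hvvnn fun h => hv (dotProduct_self_eq_zero.1 h.symm)
  -- dot the eigen equation with v
  have key := congrArg (fun x => v ⬝ᵥ x) heig
  simp only [Matrix.add_mulVec, dotProduct_add, dotProduct_smul,
    Matrix.smul_mulVec, Matrix.one_mulVec, smul_eq_mul] at key
  rw [quad_diag, quad_diag] at key
  set S : ℝ := ∑ j, (if j ∈ Nset then 0 else g j) * w j ^ 2 with hS
  set F : ℝ := ∑ j, g j * w j ^ 2 with hF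
  set T : ℝ := ∑ j ∈ Nset, g j * w j ^ 2 with hT
  have hFS : F - S = T := by
    rw [hF, hS, hT, ← Finset.sum_sub_distrib]
    have h1 : ∀ j, g j * w j ^ 2 - (if j ∈ Nset then 0 else g j) * w j ^ 2
        = if j ∈ Nset then g j * w j ^ 2 else 0 := fun j => by split <;> ring
    simp_rw [h1]
    rw [Finset.sum_ite_mem, Finset.univ_inter]
  have key' : T + (S + δ * vv) = lam * (S + δ * vv) := by
    have h2 : F + δ * vv = lam * (S + δ * vv) := key
    linarith
  have hS0 : 0 ≤ S := Finset.sum_nonneg fun j _ =>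
    mul_nonneg (by split_ifs with h <;> simp [le_rfl, (hg j).le]) (sq_nonneg _)
  have hT0 : 0 ≤ T := Finset.sum_nonneg fun j _ => mul_nonneg (hg j).le (sq_nonneg _)
  have hden : 0 < S + δ * vv := by nlinarith
  have hlam1 : 1 ≤ lam := by nlinarith
  refine ⟨hlam1, ?_⟩
  set c : ℝ := ⨆ j : {x // x ∈ Nset}, g j.1 with hc
  set μ : ℝ := ⨆ i, (Matrix.isHermitian_mul_conjTranspose_self A).eigenvalues i with hμ
  have hc0 : 0 ≤ c := by
    rcases isEmpty_or_nonempty {x // x ∈ Nset} with h | h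
    · rw [hc, Real.iSup_of_isEmpty]
    · obtain ⟨j⟩ := h
      have := le_ciSup (f := fun j : {x // x ∈ Nset} => g j.1) (Set.finite_range _).bddAbove j
      exact le_trans (hg j.1).le this
  have hgc : ∀ j ∈ Nset, g j ≤ c := fun j hj =>
    le_ciSup (f := fun j : {x // x ∈ Nset} => g j.1) (Set.finite_range _).bddAbove ⟨j, hj⟩
  have hwwq : v ⬝ᵥ ((A * Aᴴ) *ᵥ v) = w ⬝ᵥ w := by
    rw [Matrix.conjTranspose_eq_transpose_of_trivial, ← Matrix.mulVec_mulVec,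
      Matrix.dotProduct_mulVec, ← Matrix.mulVec_transpose, hw]
  have hray : w ⬝ᵥ w ≤ μ * vv := by
    rw [← hwwq]
    exact rayleigh_bound _ (Matrix.isHermitian_mul_conjTranspose_self A) v
  have hTc : T ≤ c * (w ⬝ᵥ w) := by
    have h1 : T ≤ ∑ j ∈ Nset, c * w j ^ 2 :=
      Finset.sum_le_sum fun j hj => by nlinarith [sq_nonneg (w j), hgc j hj]
    have h2 : ∑ j ∈ Nset, c * w j ^ 2 ≤ ∑ j, c * w j ^ 2 :=
      Finset.sum_le_sum_of_subset_of_nonneg (Finset.subset_univ _)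
        fun j _ _ => by positivity
    have h3 : (∑ j, c * w j ^ 2) = c * (w ⬝ᵥ w) := by
      rw [dotProduct, Finset.mul_sum]
      exact Finset.sum_congr rfl fun j _ => by ring
    linarith
  have hμvv : T ≤ c * (μ * vv) := le_trans hTc (by nlinarith)
  -- (lam - 1) * δ * vv ≤ (lam - 1) * (S + δ vv) = T ≤ c * μ * vv
  have hfin : (lam - 1) * (δ * vv) ≤ c * (μ * vv) := by nlinarith
  rw [div_mul_eq_mul_div, ← sub_le_iff_le_add']
  rw [le_div_iff₀ hδ]
  nlinarith
end
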